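/- In any open game, if a position lacks an ordinal game value for White, then Black has a strategy from that position guaranteeing that White never wins (i.e., no position won for White is ever reached). -/

import Mathlib

open Ordinal

/-- A two-player perfect-information game with an open winning condition for
White: positions form a game tree, each position has a player to move and a
nonempty set of legal moves, and White wins a play iff some finite position
along it is declared won for White (openness). -/
structure Game where
  Pos : Type
  /-- `true` means White is to move. -/
  turn : Pos → Bool
  /-- The set of positions legally reachable in one move. -/
  moves : Pos → Set Pos
  /-- Every position admits a legal move (plays can always continue). -/
  moves_nonempty : ∀ p, (moves p).Nonempty
  /-- The position is already won for White. -/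
  won : Pos → Prop

namespace Game

variable (G : Game)

/-- A witness that White can force a win from `p`: the position is won, or
White to move has some move with a witness, or Black to move and all moves
have witnesses.  `Wins p` is inhabited exactly when `p` lies in the domain of
the least partial game valuation. -/
inductive Wins : G.Pos → Type
  | zero (p : G.Pos) (h : G.won p) : Wins p
  | white (p q : G.Pos) (hw : ¬ G.won p) (ht : G.turn p = true)
      (hq : q ∈ G.moves p) (w : Wins q) : Wins p
  | black (p : G.Pos) (hw : ¬ G.won p) (ht : G.turn p = false)
      (f : ∀ q ∈ G.moves p, Wins q) : Wins p

/-- The ordinal rank of a winning witness: `0` at won positions, successor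
through White's chosen move, supremum over all of Black's moves. -/
noncomputable def rank : {p : G.Pos} → G.Wins p → Ordinal
  | _, .zero _ _ => 0
  | _, .white _ _ _ _ _ w => rank w + 1
  | _, .black p _ _ f => ⨆ q : G.moves p, rank (f q.1 q.2)

/-- The least partial ordinal game valuation for White: `Value p α` holds iff
`α` is the minimal rank of a winning witness at `p`.  Equivalently, the value
is `0` at won positions, `β + 1` at White-to-move positions where `β` is least
among the values of the moves, and the supremum of the values of the moves at
Black-to-move positions (defined only when all moves are valued); positions
with no witness are left without a value. -/
def Value (p : G.Pos) (α : Ordinal) : Prop :=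
  (∃ w : G.Wins p, G.rank w = α) ∧ ∀ w : G.Wins p, α ≤ G.rank w

/-- A strategy is legal if it always selects a legal move. -/
def Legal (σ : G.Pos → G.Pos) : Prop :=
  ∀ x, σ x ∈ G.moves x

open Classical in
/-- One step of play consistent with White's strategy `σ`; play halts at won
positions. -/
def WStep (σ : G.Pos → G.Pos) (x y : G.Pos) : Prop :=
  if G.won x then y = x
  else y ∈ G.moves x ∧ (G.turn x = true → y = σ x)

open Classical in
/-- One step of play consistent with Black's strategy `τ`; play halts at won
positions. -/
def BStep (τ : G.Pos → G.Pos) (x y : G.Pos) : Prop :=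
  if G.won x then y = x
  else y ∈ G.moves x ∧ (G.turn x = false → y = τ x)

/-- A play from `p` consistent with White's strategy `σ`. -/
def WPlay (σ : G.Pos → G.Pos) (p : G.Pos) (f : ℕ → G.Pos) : Prop :=
  f 0 = p ∧ ∀ n, G.WStep σ (f n) (f (n + 1))

/-- A play from `p` consistent with Black's strategy `τ`. -/
def BPlay (τ : G.Pos → G.Pos) (p : G.Pos) (f : ℕ → G.Pos) : Prop :=
  f 0 = p ∧ ∀ n, G.BStep τ (f n) (f (n + 1))

/-- White has a winning strategy from `p`: every consistent play reaches a
position won for White. -/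
def WhiteWins (p : G.Pos) : Prop :=
  ∃ σ, G.Legal σ ∧ ∀ f : ℕ → G.Pos, G.WPlay σ p f → ∃ n, G.won (f n)

/-- Black has a strategy from `p` guaranteeing that no position won for White
is ever reached. -/
def BlackDraws (p : G.Pos) : Prop :=
  ∃ τ, G.Legal τ ∧ ∀ f : ℕ → G.Pos, G.BPlay τ p f → ∀ n, ¬ G.won (f n)

end Game

/-!
Black keeps the play among positions admitting no winning witness for White. Such a position
is not won; if White is to move, every move again has no witness (else White would move there),
and if Black is to move, some move has no witness (else the witnesses of all moves would
assemble into one). Since a value is just the least rank of a witness, an unvalued position is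
one without witness, so this invariant holds from the start.
-/

namespace Game

variable (G : Game)

theorem exists_value_iff_nonempty_wins (p : G.Pos) :
    (∃ α, G.Value p α) ↔ Nonempty (G.Wins p) := by
  refine ⟨fun ⟨_, ⟨w, _⟩, _⟩ => ⟨w⟩, fun ⟨w⟩ => ?_⟩
  have hne : (Set.range (G.rank (p := p))).Nonempty := ⟨G.rank w, w, rfl⟩
  exact ⟨sInf _, csInf_mem hne, fun w' => csInf_le (OrderBot.bddBelow _) ⟨w', rfl⟩⟩

variable {G}

theorem not_won_of_isEmpty_wins {p : G.Pos} (hp : IsEmpty (G.Wins p)) : ¬ G.won p :=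
  fun hw => hp.false (.zero p hw)

theorem isEmpty_wins_of_mem_moves {p q : G.Pos} (hp : IsEmpty (G.Wins p))
    (ht : G.turn p = true) (hq : q ∈ G.moves p) : IsEmpty (G.Wins q) :=
  ⟨fun w => hp.false (.white p q (not_won_of_isEmpty_wins hp) ht hq w)⟩

theorem exists_mem_moves_isEmpty_wins {p : G.Pos} (hp : IsEmpty (G.Wins p))
    (ht : G.turn p = false) : ∃ q ∈ G.moves p, IsEmpty (G.Wins q) := by
  by_contra! h
  exact hp.false (.black p (not_won_of_isEmpty_wins hp) ht fun q hq => (h q hq).some)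

variable (G)

open Classical in
noncomputable def drawStrategy (x : G.Pos) : G.Pos :=
  if h : ∃ q ∈ G.moves x, IsEmpty (G.Wins q) then h.choose else (G.moves_nonempty x).some

theorem legal_drawStrategy : G.Legal G.drawStrategy := by
  intro x
  unfold drawStrategy
  split_ifs with h
  · exact h.choose_spec.1
  · exact (G.moves_nonempty x).some_mem

variable {G}

theorem isEmpty_wins_drawStrategy {p : G.Pos} (hp : IsEmpty (G.Wins p))
    (ht : G.turn p = false) : IsEmpty (G.Wins (G.drawStrategy p)) := by
  have h := exists_mem_moves_isEmpty_wins hp ht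
  rw [drawStrategy, dif_pos h]
  exact h.choose_spec.2

theorem isEmpty_wins_of_bStep {x y : G.Pos} (hx : IsEmpty (G.Wins x))
    (hxy : G.BStep G.drawStrategy x y) : IsEmpty (G.Wins y) := by
  rw [BStep, if_neg (not_won_of_isEmpty_wins hx)] at hxy
  obtain ⟨hmove, hblack⟩ := hxy
  cases ht : G.turn x with
  | true => exact isEmpty_wins_of_mem_moves hx ht hmove
  | false => exact hblack ht ▸ isEmpty_wins_drawStrategy hx ht

theorem isEmpty_wins_of_bPlay {p : G.Pos} {f : ℕ → G.Pos} (hp : IsEmpty (G.Wins p))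
    (hf : G.BPlay G.drawStrategy p f) (n : ℕ) : IsEmpty (G.Wins (f n)) := by
  induction n with
  | zero => exact hf.1 ▸ hp
  | succ n ih => exact isEmpty_wins_of_bStep ih (hf.2 n)

end Game

/-- If a position lacks an ordinal game value for White, then
Black has a strategy guaranteeing that White never wins. -/
theorem unvalued_implies_blackDraws (G : Game) (p : G.Pos)
    (h : ¬ ∃ α, G.Value p α) : G.BlackDraws p := by
  have hp : IsEmpty (G.Wins p) :=
    not_nonempty_iff.mp <| (G.exists_value_iff_nonempty_wins p).not.mp h
  exact ⟨G.drawStrategy, G.legal_drawStrategy, fun f hf n =>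
    Game.not_won_of_isEmpty_wins (Game.isEmpty_wins_of_bPlay hp hf n)⟩
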